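/- arXiv:1602.07435 — 3 statements merged into one kernel-verified Lean document; each statement's English description precedes it below -/
import Mathlib

section
/- Let σ₀ > 0, θ > 0, q* > 0 be fixed. Define g(q) = [((1/σ₀² + q*)/(1/σ₀² + q))² · θ·q*] − θ·q for q ≥ 0. Then g(q) = 0 if and only if q = q*, g(q) > 0 for q < q*, and g(q) < 0 for q > q*. -/
/-- The agent's first-order condition under quadratic cost: with
g(q) = ((1/σ₀²+q*)/(1/σ₀²+q))²·θ·q* − θ·q on q ≥ 0, g vanishes exactly at
q = q*, is positive before and negative after. -/
theorem stmt_12 (σ₀ θ qstar : ℝ) (hσ : 0 < σ₀) (hθ : 0 < θ) (hq : 0 < qstar) :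
    let g : ℝ → ℝ := fun q =>
      ((1 / σ₀ ^ 2 + qstar) / (1 / σ₀ ^ 2 + q)) ^ 2 * θ * qstar - θ * q
    ∀ q : ℝ, 0 ≤ q →
      (g q = 0 ↔ q = qstar) ∧ (q < qstar → 0 < g q) ∧ (qstar < q → g q < 0) := by
  intro g q hqn
  have ha : 0 < 1 / σ₀ ^ 2 := by positivity
  set a := 1 / σ₀ ^ 2 with ha_def
  have hdq : 0 < a + q := by linarith
  have hds : 0 < a + qstar := by linarith
  have key : g q = θ * (qstar * (a + qstar) ^ 2 - q * (a + q) ^ 2) / (a + q) ^ 2 := by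
    show ((a + qstar) / (a + q)) ^ 2 * θ * qstar - θ * q = _
    field_simp
  have mono : ∀ x y : ℝ, 0 ≤ x → x < y → 0 ≤ a + x → x * (a + x) ^ 2 < y * (a + y) ^ 2 := by
    intro x y hx hxy hax
    have hy : 0 ≤ y := hx.trans hxy.le
    have h2 : 0 < (y - x) * (a ^ 2 + 2 * a * (x + y) + (x ^ 2 + x * y + y ^ 2)) := by
      apply mul_pos
      · linarith
      · nlinarith [sq_nonneg x, sq_nonneg y, mul_nonneg hx hy, mul_nonneg (mul_nonneg ha.le hx) hy]
    nlinarith [h2]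
  have hpos : q < qstar → 0 < g q := by
    intro h
    rw [key]
    have hm := mono q qstar hqn h hdq.le
    have : 0 < θ * (qstar * (a + qstar) ^ 2 - q * (a + q) ^ 2) := by nlinarith
    positivity
  have hneg : qstar < q → g q < 0 := by
    intro h
    rw [key]
    have hm := mono qstar q hq.le h hds.le
    apply div_neg_of_neg_of_pos
    · nlinarith
    · positivity
  refine ⟨⟨?_, ?_⟩, hpos, hneg⟩
  · intro h0
    rcases lt_trichotomy q qstar with h | h | h
    · have := hpos h; linarith
    · exact h
    · have := hneg h; linarith
  · rintro rfl
    rw [key]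
    simp
end

section
/- Let 0 ≤ θ̲ < θ̄, σ₀ > 0, and for each θ ∈ [θ̲, θ̄] with 2θ − θ̲ > 0 let Q(θ) = ((2θ − θ̲)·W²)^{-1} where W > 0 is the unique positive solution of W³ − W²/σ₀² = Σ_{m=1}^{N} 1/(2θₘ − θ̲) with θ = θₙ one of the θₘ. Then Q as a function of θₙ (holding the other θₘ fixed) is strictly decreasing. -/
set_option maxHeartbeats 1600000 in
/-- Under quadratic costs with uniform types, the required effort
Q(θₙ) = 1/((2θₙ − θ̲)·W(θₙ)²), where W(θₙ) is the unique positive root of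
W³ − W²/σ₀² = Σₘ 1/(2θₘ − θ̲) (agent n's type varying, the others fixed),
is strictly decreasing in θₙ on the set where 2θₙ − θ̲ > 0. -/
theorem stmt_15 (N : ℕ) (σ₀ lo hi : ℝ) (hσ : 0 < σ₀) (hlo : 0 ≤ lo)
    (hlohi : lo < hi) (θ : Fin N → ℝ) (hθ : ∀ m, θ m ∈ Set.Icc lo hi)
    (hθpos : ∀ m, 0 < 2 * θ m - lo) (n : Fin N) (W : ℝ → ℝ)
    (hW : ∀ t ∈ Set.Icc lo hi, 0 < 2 * t - lo →
      0 < W t ∧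
        (W t) ^ 3 - (W t) ^ 2 / σ₀ ^ 2
          = ∑ m, if m = n then 1 / (2 * t - lo) else 1 / (2 * θ m - lo)) :
    StrictAntiOn (fun t : ℝ => ((2 * t - lo) * (W t) ^ 2)⁻¹)
      {t ∈ Set.Icc lo hi | 0 < 2 * t - lo} := by
  intro t1 ht1 t2 ht2 h12
  obtain ⟨ht1m, ht1p⟩ := ht1
  obtain ⟨ht2m, ht2p⟩ := ht2
  obtain ⟨hW1, hE1⟩ := hW t1 ht1m ht1p
  obtain ⟨hW2, hE2⟩ := hW t2 ht2m ht2p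
  obtain ⟨c, hc0, hcsum⟩ : ∃ c : ℝ, 0 ≤ c ∧ ∀ x : ℝ,
      (∑ m, if m = n then x else 1 / (2 * θ m - lo)) = x + c := by
    refine ⟨∑ m, if m = n then 0 else 1 / (2 * θ m - lo), ?_, ?_⟩
    · apply Finset.sum_nonneg
      intro m _
      split_ifs with h
      · exact le_rfl
      · have := hθpos m; positivity
    · intro x
      have h : ∀ m : Fin N, (if m = n then x else 1 / (2 * θ m - lo))
          = (if m = n then x else 0) + (if m = n then 0 else 1 / (2 * θ m - lo)) := by
        intro m; split <;> simp
      simp only [h, Finset.sum_add_distrib, Finset.sum_ite_eq',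
        Finset.mem_univ, if_true]
  rw [hcsum] at hE1 hE2
  have hσ2 : (0:ℝ) < σ₀ ^ 2 := by positivity
  have hu1 : (0:ℝ) < 1 / (2 * t1 - lo) := by positivity
  have hu2 : (0:ℝ) < 1 / (2 * t2 - lo) := by positivity
  have hu12 : 1 / (2 * t2 - lo) < 1 / (2 * t1 - lo) := by
    apply one_div_lt_one_div_of_lt ht1p; linarith
  -- clear denominators in the cubic equations
  have heq1 : W t1 ^ 3 * σ₀ ^ 2 - W t1 ^ 2 = (1 / (2 * t1 - lo) + c) * σ₀ ^ 2 := by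
    have h' : (W t1 ^ 3 - W t1 ^ 2 / σ₀ ^ 2) * σ₀ ^ 2
        = (1 / (2 * t1 - lo) + c) * σ₀ ^ 2 := by rw [hE1]
    rw [sub_mul, div_mul_cancel₀ _ (ne_of_gt hσ2)] at h'
    exact h'
  have heq2 : W t2 ^ 3 * σ₀ ^ 2 - W t2 ^ 2 = (1 / (2 * t2 - lo) + c) * σ₀ ^ 2 := by
    have h' : (W t2 ^ 3 - W t2 ^ 2 / σ₀ ^ 2) * σ₀ ^ 2
        = (1 / (2 * t2 - lo) + c) * σ₀ ^ 2 := by rw [hE2]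
    rw [sub_mul, div_mul_cancel₀ _ (ne_of_gt hσ2)] at h'
    exact h'
  have hrhs1 : 0 < (1 / (2 * t1 - lo) + c) * σ₀ ^ 2 := by positivity
  have hrhs2 : 0 < (1 / (2 * t2 - lo) + c) * σ₀ ^ 2 := by positivity
  have hgt1 : 1 < W t1 * σ₀ ^ 2 := by
    nlinarith [mul_pos hW1 hW1]
  have hgt2 : 1 < W t2 * σ₀ ^ 2 := by
    nlinarith [mul_pos hW2 hW2]
  have hW12 : W t2 < W t1 := by
    by_contra h
    push_neg at h
    have ha : 0 ≤ W t2 - W t1 := by linarith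
    have b1 : 0 < σ₀ ^ 2 * W t1 ^ 2 - W t1 := by
      nlinarith [mul_pos hW1 (show (0:ℝ) < W t1 * σ₀ ^ 2 - 1 by linarith)]
    have b2 : 0 < σ₀ ^ 2 * W t2 ^ 2 - W t2 := by
      nlinarith [mul_pos hW2 (show (0:ℝ) < W t2 * σ₀ ^ 2 - 1 by linarith)]
    have b3 : (0:ℝ) ≤ σ₀ ^ 2 * (W t1 * W t2) := by positivity
    have hdiff : (1 / (2 * t2 - lo) - 1 / (2 * t1 - lo)) * σ₀ ^ 2 < 0 :=
      mul_neg_of_neg_of_pos (by linarith) hσ2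
    have key : (W t2 - W t1) * (σ₀ ^ 2 * W t1 ^ 2 - W t1)
          + (W t2 - W t1) * (σ₀ ^ 2 * W t2 ^ 2 - W t2)
          + (W t2 - W t1) * (σ₀ ^ 2 * (W t1 * W t2))
        = (W t2 ^ 3 * σ₀ ^ 2 - W t2 ^ 2) - (W t1 ^ 3 * σ₀ ^ 2 - W t1 ^ 2) := by
      ring
    have hsum : (1 / (2 * t2 - lo) + c) * σ₀ ^ 2 - (1 / (2 * t1 - lo) + c) * σ₀ ^ 2
        = (1 / (2 * t2 - lo) - 1 / (2 * t1 - lo)) * σ₀ ^ 2 := by ring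
    linarith [mul_nonneg ha b1.le, mul_nonneg ha b2.le, mul_nonneg ha b3]
  have hWne1 : W t1 ≠ 0 := ne_of_gt hW1
  have hWne2 : W t2 ≠ 0 := ne_of_gt hW2
  have hq1 : ((2 * t1 - lo) * (W t1) ^ 2)⁻¹ = W t1 - 1 / σ₀ ^ 2 - c / (W t1) ^ 2 := by
    have e : (2 * t1 - lo)⁻¹ = W t1 ^ 3 - W t1 ^ 2 / σ₀ ^ 2 - c := by
      rw [inv_eq_one_div]; linarith
    rw [mul_inv, e]
    field_simp
  have hq2 : ((2 * t2 - lo) * (W t2) ^ 2)⁻¹ = W t2 - 1 / σ₀ ^ 2 - c / (W t2) ^ 2 := by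
    have e : (2 * t2 - lo)⁻¹ = W t2 ^ 3 - W t2 ^ 2 / σ₀ ^ 2 - c := by
      rw [inv_eq_one_div]; linarith
    rw [mul_inv, e]
    field_simp
  show ((2 * t2 - lo) * (W t2) ^ 2)⁻¹ < ((2 * t1 - lo) * (W t1) ^ 2)⁻¹
  rw [hq1, hq2]
  have hdiv : c / (W t1) ^ 2 ≤ c / (W t2) ^ 2 := by
    rw [div_le_div_iff₀ (by positivity) (by positivity)]
    have h2 : W t2 ^ 2 ≤ W t1 ^ 2 := by nlinarith
    nlinarith [mul_le_mul_of_nonneg_left h2 hc0]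
  linarith
end

section
/- Let Q: [θ̲, θ̄] → ℝ≥0 be nonincreasing and define U(θ̂, θ) = π(θ̂) − (θ/2)·Q(θ̂)² with π(θ̂) = (θ̂/2)·Q(θ̂)² + (1/2)∫_{θ̂}^{θ̄} Q(z)² dz. Then U(θ, θ) ≥ U(θ̂, θ) for all θ, θ̂ ∈ [θ̲, θ̄], and U(θ̄, θ̄) = 0 and U(θ, θ) = (1/2)∫_{θ}^{θ̄} Q(z)² dz ≥ 0. -/
/-- Payment construction for quadratic costs: with Q ≥ 0 nonincreasing on
[θ̲, θ̄], π(θ̂) = (θ̂/2)Q(θ̂)² + (1/2)∫_{θ̂}^{θ̄} Q², and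
U(θ̂, θ) = π(θ̂) − (θ/2)Q(θ̂)², truthful reporting maximizes the payoff,
U(θ̄, θ̄) = 0, and U(θ, θ) = (1/2)∫_{θ}^{θ̄} Q² ≥ 0. -/
theorem stmt_19 (lo hi : ℝ) (hlohi : lo < hi) (Q : ℝ → ℝ)
    (hQnonneg : ∀ θ ∈ Set.Icc lo hi, 0 ≤ Q θ)
    (hQanti : AntitoneOn Q (Set.Icc lo hi)) :
    let π : ℝ → ℝ := fun θhat =>
      (θhat / 2) * (Q θhat) ^ 2 + (1 / 2) * ∫ z in θhat..hi, (Q z) ^ 2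
    let U : ℝ → ℝ → ℝ := fun θhat θ => π θhat - (θ / 2) * (Q θhat) ^ 2
    (∀ θ ∈ Set.Icc lo hi, ∀ θhat ∈ Set.Icc lo hi, U θhat θ ≤ U θ θ) ∧
    U hi hi = 0 ∧
    ∀ θ ∈ Set.Icc lo hi,
      U θ θ = (1 / 2) * (∫ z in θ..hi, (Q z) ^ 2) ∧ 0 ≤ U θ θ := by
  intro π U
  set f : ℝ → ℝ := fun z => Q z ^ 2 with hfdef
  have hfanti : AntitoneOn f (Set.Icc lo hi) := fun a ha b hb hab =>
    pow_le_pow_left₀ (hQnonneg b hb) (hQanti ha hb hab) 2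
  have hint : ∀ a ∈ Set.Icc lo hi, ∀ b ∈ Set.Icc lo hi,
      IntervalIntegrable f MeasureTheory.volume a b := by
    intro a ha b hb
    exact (hfanti.mono (Set.uIcc_subset_Icc ha hb)).intervalIntegrable
  -- lower/upper bounds on integrals over subintervals
  have hlow : ∀ a ∈ Set.Icc lo hi, ∀ b ∈ Set.Icc lo hi, a ≤ b →
      (b - a) * f b ≤ ∫ z in a..b, f z := by
    intro a ha b hb hab
    have h1 : ∫ z in a..b, f b = (b - a) * f b := by
      simp [intervalIntegral.integral_const, mul_comm]
    rw [← h1]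
    apply intervalIntegral.integral_mono_on hab intervalIntegrable_const
      (hint a ha b hb)
    intro x hx
    exact hfanti (Set.mem_Icc.mpr ⟨le_trans ha.1 hx.1, le_trans hx.2 hb.2⟩) hb hx.2
  have hhigh : ∀ a ∈ Set.Icc lo hi, ∀ b ∈ Set.Icc lo hi, a ≤ b →
      (∫ z in a..b, f z) ≤ (b - a) * f a := by
    intro a ha b hb hab
    have h1 : ∫ z in a..b, f a = (b - a) * f a := by
      simp [intervalIntegral.integral_const, mul_comm]
    rw [← h1]
    apply intervalIntegral.integral_mono_on hab (hint a ha b hb)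
      intervalIntegrable_const
    intro x hx
    exact hfanti ha (Set.mem_Icc.mpr ⟨le_trans ha.1 hx.1, le_trans hx.2 hb.2⟩) hx.1
  have hUeq : ∀ a b : ℝ, U a b = (a - b) / 2 * f a + 1 / 2 * ∫ z in a..hi, f z := by
    intro a b
    simp only [U, π, hfdef]
    ring
  have hnonneg : ∀ θ ∈ Set.Icc lo hi, 0 ≤ ∫ z in θ..hi, f z := by
    intro θ hθ
    have := hlow θ hθ hi (Set.mem_Icc.mpr ⟨le_of_lt hlohi, le_refl hi⟩) hθ.2
    have hfnn : 0 ≤ f hi := sq_nonneg _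
    nlinarith [hθ.2]
  refine ⟨?_, ?_, ?_⟩
  · intro θ hθ θhat hθhat
    have hhimem : hi ∈ Set.Icc lo hi := Set.mem_Icc.mpr ⟨le_of_lt hlohi, le_refl hi⟩
    rw [hUeq, hUeq]
    have hsplit : (∫ z in θ..θhat, f z) + (∫ z in θhat..hi, f z) = ∫ z in θ..hi, f z :=
      intervalIntegral.integral_add_adjacent_intervals (hint θ hθ θhat hθhat)
        (hint θhat hθhat hi hhimem)
    have key : (θhat - θ) * f θhat ≤ ∫ z in θ..θhat, f z := by
      rcases le_total θ θhat with h | h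
      · exact hlow θ hθ θhat hθhat h
      · have h2 := hhigh θhat hθhat θ hθ h
        have h3 : (∫ z in θ..θhat, f z) = -∫ z in θhat..θ, f z :=
          intervalIntegral.integral_symm θhat θ
        rw [h3]; nlinarith
    simp only [sub_self, zero_div, zero_mul, zero_add] at *
    linarith
  · have : (∫ z in hi..hi, f z) = 0 := intervalIntegral.integral_same
    simp only [U, π, hfdef] at *
    rw [this]
    ring
  · intro θ hθ
    constructor
    · rw [hUeq]; simp
    · rw [hUeq]
      simp only [sub_self, zero_div, zero_mul, zero_add]
      have := hnonneg θ hθ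
      linarith
end
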